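/- arXiv:math/0609766 — 2 statements merged into one kernel-verified Lean document; each statement's English description precedes it below -/
import Mathlib

section
/- For every λ ≥ 0 and every x ∈ ℤ^d, the annealed two-point function satisfies ‖x‖₁(λ + φ(1)) ≤ b_λ(x) ≤ ‖x‖₁(λ + log(2d) + φ(1)). -/
open MeasureTheory ProbabilityTheory Filter Topology Set Pointwise

noncomputable section

namespace RWRP

/-- The `2d` unit steps in `ℤ^d`. -/
def unitSteps (d : ℕ) : Finset (Fin d → ℤ) :=
  (Finset.univ : Finset (Fin d × Bool)).image
    (fun p => fun j => if j = p.1 then (if p.2 then 1 else -1) else 0)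

/-- The uniform distribution on the `2d` unit steps of `ℤ^d`. -/
def stepDist (d : ℕ) : Measure (Fin d → ℤ) :=
  ((unitSteps d).card : ENNReal)⁻¹ • ∑ s ∈ unitSteps d, Measure.dirac s

/-- `S` is the symmetric nearest-neighbor random walk on `ℤ^d` under `P`, started at the
origin: `S 0 = 0` and the increments are i.i.d., uniformly distributed on the unit steps. -/
def IsSRW {d : ℕ} {Ω : Type*} [MeasurableSpace Ω] (P : Measure Ω)
    (S : ℕ → Ω → Fin d → ℤ) : Prop :=
  (∀ ω, S 0 ω = 0) ∧ (∀ n, Measurable (S n)) ∧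
    (∀ n, Measure.map (fun ω => S (n + 1) ω - S n ω) P = stepDist d) ∧
    iIndepFun (fun n ω => S (n + 1) ω - S n ω) P

/-- The `ℓ¹`-norm of a point of `ℤ^d`. -/
def norm1Z {d : ℕ} (x : Fin d → ℤ) : ℝ := ∑ i, |(x i : ℝ)|

/-- The `ℓ¹`-norm on `ℝ^d`. -/
def norm1R {d : ℕ} (x : Fin d → ℝ) : ℝ := ∑ i, |x i|

/-- The embedding `ℤ^d → ℝ^d`. -/
def zToR {d : ℕ} (x : Fin d → ℤ) : Fin d → ℝ := fun i => (x i : ℝ)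

/-- Euclidean scalar product on `ℝ^d`. -/
def dotR {d : ℕ} (h x : Fin d → ℝ) : ℝ := ∑ i, h i * x i

/-- `f` is a norm on `ℝ^d`. -/
def IsNorm {d : ℕ} (f : (Fin d → ℝ) → ℝ) : Prop :=
  (∀ x, 0 ≤ f x) ∧ (∀ x, f x = 0 ↔ x = 0) ∧
    (∀ (c : ℝ) (x), f (c • x) = |c| * f x) ∧ ∀ x y, f (x + y) ≤ f x + f y

/-- The dual norm `f*(ℓ) = sup_{x ≠ 0} (ℓ·x)/f(x)`. -/
def dualNorm {d : ℕ} (f : (Fin d → ℝ) → ℝ) (ℓ : Fin d → ℝ) : ℝ :=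
  ⨆ x : {x : Fin d → ℝ // x ≠ 0}, dotR ℓ x.1 / f x.1

/-- Number of visits of the walk to `x` during `1 ≤ m ≤ n`. -/
def localTime {d : ℕ} {Ω : Type*} (S : ℕ → Ω → Fin d → ℤ) (x : Fin d → ℤ) (n : ℕ)
    (ω : Ω) : ℕ :=
  ((Finset.Icc 1 n).filter (fun m => S m ω = x)).card

/-- Time of the first visit of the walk to the site `x`. -/
def hitTime {d : ℕ} {Ω : Type*} (S : ℕ → Ω → Fin d → ℤ) (x : Fin d → ℤ) (ω : Ω) : ℕ :=
  sInf {n : ℕ | S n ω = x}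

/-- The event that the walk ever visits the site `x`, i.e. `H(x) < ∞`. -/
def hits {d : ℕ} {Ω : Type*} (S : ℕ → Ω → Fin d → ℤ) (x : Fin d → ℤ) : Set Ω :=
  {ω | ∃ n, S n ω = x}

/-- Entrance time of the walk into the half-space `{x : ℓ·x ≥ u}`. -/
def hitHalf {d : ℕ} {Ω : Type*} (S : ℕ → Ω → Fin d → ℤ) (ℓ : Fin d → ℝ) (u : ℝ)
    (ω : Ω) : ℕ :=
  sInf {n : ℕ | u ≤ dotR ℓ (zToR (S n ω))}

/-- The annealed path potential `Φ(n) = Σ_{x ∈ ℤ^d} φ(l_x(n))`. -/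
def annPotential {d : ℕ} {Ω : Type*} (φ : ℝ → ℝ) (S : ℕ → Ω → Fin d → ℤ) (n : ℕ)
    (ω : Ω) : ℝ :=
  ∑' x : Fin d → ℤ, φ (localTime S x n ω)

/-- Assumptions (An) on the annealed potential shape function `φ`. -/
def IsGoodPhi (φ : ℝ → ℝ) : Prop :=
  φ 0 = 0 ∧ (∀ t, 0 ≤ t → 0 ≤ φ t) ∧ MonotoneOn φ (Ici 0) ∧ ConcaveOn ℝ (Ici 0) φ ∧
    (∃ t, 0 ≤ t ∧ φ t ≠ 0) ∧ Tendsto (fun t => φ t / t) atTop (𝓝 0)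

/-- The annealed two-point function `b_λ(x)`. -/
def twoPointB {d : ℕ} {Ω : Type*} [MeasurableSpace Ω] (P : Measure Ω) (φ : ℝ → ℝ)
    (S : ℕ → Ω → Fin d → ℤ) (lam : ℝ) (x : Fin d → ℤ) : ℝ :=
  -Real.log (∫ ω, Set.indicator (hits S x)
    (fun ω' => Real.exp (-(lam * (hitTime S x ω' : ℝ))
      - annPotential φ S (hitTime S x ω') ω')) ω ∂P)

/-- The quenched path potential `Ψ(n,ω) = Σ_{1 ≤ m ≤ n} V_{S(m)}(ω)`. -/
def quPotential {d : ℕ} {Ω Ωe : Type*} (V : (Fin d → ℤ) → Ωe → ℝ)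
    (S : ℕ → Ω → Fin d → ℤ) (n : ℕ) (ωe : Ωe) (ω : Ω) : ℝ :=
  ∑ m ∈ Finset.Icc 1 n, V (S m ω) ωe

/-- The quenched two-point function `a_λ(x,ω)`. -/
def twoPointA {d : ℕ} {Ω Ωe : Type*} [MeasurableSpace Ω] (P : Measure Ω)
    (V : (Fin d → ℤ) → Ωe → ℝ) (S : ℕ → Ω → Fin d → ℤ) (lam : ℝ) (x : Fin d → ℤ)
    (ωe : Ωe) : ℝ :=
  -Real.log (∫ ω, Set.indicator (hits S x)
    (fun ω' => Real.exp (-(lam * (hitTime S x ω' : ℝ))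
      - quPotential V S (hitTime S x ω') ωe ω')) ω ∂P)

/-- Assumptions (Qu) on the random potential `𝕍 = (V_x)`: i.i.d., nonnegative, nontrivial,
in `L^d`, with essential infimum `0`. -/
def IsIIDPotential {d : ℕ} {Ωe : Type*} [MeasurableSpace Ωe] (μ : Measure Ωe)
    (V : (Fin d → ℤ) → Ωe → ℝ) : Prop :=
  (∀ x, Measurable (V x)) ∧
    (∀ x, ∀ᵐ ωe ∂μ, 0 ≤ V x ωe) ∧
    iIndepFun V μ ∧
    (∀ x, Measure.map (V x) μ = Measure.map (V 0) μ) ∧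
    (¬∃ c : ℝ, V 0 =ᵐ[μ] fun _ => c) ∧
    MemLp (V 0) d μ ∧
    essInf (V 0) μ = 0

/-- The quenched shape theorem property for the family `α` of Lyapunov norms:
`a_λ(x_k, ·)/α_λ(x_k) → 1` almost surely along any `‖x_k‖₁ → ∞`. -/
def QuShape {d : ℕ} {Ω Ωe : Type*} [MeasurableSpace Ω] [MeasurableSpace Ωe]
    (P : Measure Ω) (μ : Measure Ωe) (V : (Fin d → ℤ) → Ωe → ℝ)
    (S : ℕ → Ω → Fin d → ℤ) (α : ℝ → (Fin d → ℝ) → ℝ) : Prop :=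
  ∀ lam : ℝ, 0 ≤ lam → ∃ F : Set Ωe, μ Fᶜ = 0 ∧
    ∀ ωe ∈ F, ∀ xs : ℕ → Fin d → ℤ, Tendsto (fun k => norm1Z (xs k)) atTop atTop →
      Tendsto (fun k => twoPointA P V S lam (xs k) ωe / α lam (zToR (xs k))) atTop (𝓝 1)

/-- The annealed shape theorem property for the family `β` of Lyapunov norms:
`b_λ(x_k)/β_λ(x_k) → 1` along any `‖x_k‖₁ → ∞`. -/
def AnShape {d : ℕ} {Ω : Type*} [MeasurableSpace Ω] (P : Measure Ω) (φ : ℝ → ℝ)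
    (S : ℕ → Ω → Fin d → ℤ) (β : ℝ → (Fin d → ℝ) → ℝ) : Prop :=
  ∀ lam : ℝ, 0 ≤ lam → ∀ xs : ℕ → Fin d → ℤ,
    Tendsto (fun k => norm1Z (xs k)) atTop atTop →
      Tendsto (fun k => twoPointB P φ S lam (xs k) / β lam (zToR (xs k))) atTop (𝓝 1)

/-- The rate function `x ↦ sup_{λ ≥ 0} (β_λ(x) − λ)`, with values in `EReal`. -/
def rateFn {d : ℕ} (β : ℝ → (Fin d → ℝ) → ℝ) (x : Fin d → ℝ) : EReal :=
  ⨆ (lam : ℝ) (_ : 0 ≤ lam), ((β lam x - lam : ℝ) : EReal)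

/-- The free energy `sup_{x ∈ ℝ^d} (h·x − I(x))`, with values in `EReal`. -/
def freeEnergySup {d : ℕ} (β : ℝ → (Fin d → ℝ) → ℝ) (h : Fin d → ℝ) : EReal :=
  ⨆ x : Fin d → ℝ, ((dotR h x : ℝ) : EReal) - rateFn β x

/-- The tilted rate function `x ↦ I(x) − h·x + sup_y (h·y − I(y))`. -/
def tiltedRate {d : ℕ} (β : ℝ → (Fin d → ℝ) → ℝ) (h x : Fin d → ℝ) : EReal :=
  rateFn β x - ((dotR h x : ℝ) : EReal) + freeEnergySup β h

/-- The annealed partition function `Z_n^h`. -/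
def Zan {d : ℕ} {Ω : Type*} [MeasurableSpace Ω] (P : Measure Ω) (φ : ℝ → ℝ)
    (S : ℕ → Ω → Fin d → ℤ) (h : Fin d → ℝ) (n : ℕ) : ℝ :=
  ∫ ω, Real.exp (dotR h (zToR (S n ω)) - annPotential φ S n ω) ∂P

/-- The annealed path measure `Q_n^h`, as an `ℝ≥0∞`-valued set function. -/
def Qan {d : ℕ} {Ω : Type*} [MeasurableSpace Ω] (P : Measure Ω) (φ : ℝ → ℝ)
    (S : ℕ → Ω → Fin d → ℤ) (h : Fin d → ℝ) (n : ℕ) (B : Set Ω) : ENNReal :=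
  (∫⁻ ω in B, ENNReal.ofReal (Real.exp (dotR h (zToR (S n ω)) - annPotential φ S n ω)) ∂P) /
    ∫⁻ ω, ENNReal.ofReal (Real.exp (dotR h (zToR (S n ω)) - annPotential φ S n ω)) ∂P

/-- The quenched partition function `Z_{n,ω}^h`. -/
def Zqu {d : ℕ} {Ω Ωe : Type*} [MeasurableSpace Ω] (P : Measure Ω)
    (V : (Fin d → ℤ) → Ωe → ℝ) (S : ℕ → Ω → Fin d → ℤ) (h : Fin d → ℝ) (n : ℕ)
    (ωe : Ωe) : ℝ :=
  ∫ ω, Real.exp (dotR h (zToR (S n ω)) - quPotential V S n ωe ω) ∂P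

/-- The quenched path measure `Q_{n,ω}^h`, as an `ℝ≥0∞`-valued set function. -/
def Qqu {d : ℕ} {Ω Ωe : Type*} [MeasurableSpace Ω] (P : Measure Ω)
    (V : (Fin d → ℤ) → Ωe → ℝ) (S : ℕ → Ω → Fin d → ℤ) (h : Fin d → ℝ) (n : ℕ)
    (ωe : Ωe) (B : Set Ω) : ENNReal :=
  (∫⁻ ω in B, ENNReal.ofReal (Real.exp (dotR h (zToR (S n ω)) - quPotential V S n ωe ω)) ∂P) /
    ∫⁻ ω, ENNReal.ofReal (Real.exp (dotR h (zToR (S n ω)) - quPotential V S n ωe ω)) ∂P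

/-! Almost surely every increment is a unit step, so `‖S m‖₁ ≤ m`: the walk needs at least
`‖x‖₁` steps to reach `x`, and on the way it visits a site of every norm `1, …, ‖x‖₁`, each
costing at least `φ 1`. Hence the integrand of `b_λ(x)` is at most `exp (-‖x‖₁ (λ + φ 1))`.
Conversely, with probability `(2d)^{-‖x‖₁}` the first `‖x‖₁` steps follow a fixed lattice
geodesic to `x`; on that event `H(x) = ‖x‖₁`, every visited site has local time one, and the
integrand equals `exp (-‖x‖₁ (λ + φ 1))`. -/

lemma exists_eq_of_increments_le_one {a : ℕ → ℕ} (h0 : a 0 = 0)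
    (hstep : ∀ m, a (m + 1) ≤ a m + 1) {n k : ℕ} (hk : k ≤ a n) : ∃ m ≤ n, a m = k := by
  induction n with
  | zero => exact ⟨0, le_rfl, by omega⟩
  | succ n ih =>
    by_cases h : k ≤ a n
    · obtain ⟨m, hm, hmk⟩ := ih h
      exact ⟨m, by omega, hmk⟩
    · exact ⟨n + 1, le_rfl, by have := hstep n; omega⟩

lemma measurable_of_factorsThrough {α β γ : Type*} [MeasurableSpace α] [MeasurableSpace β]
    [MeasurableSpace γ] [Countable β] [MeasurableSingletonClass β] {f : α → γ} {g : α → β}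
    (hg : Measurable g) (hf : f.FactorsThrough g) : Measurable f := by
  intro s _
  have : f ⁻¹' s = g ⁻¹' (g '' (f ⁻¹' s)) :=
    (subset_preimage_image g _).antisymm fun a ⟨b, hb, hba⟩ => show f a ∈ s from hf hba ▸ hb
  rw [this]
  exact hg (Set.to_countable _).measurableSet

section Lattice

variable {d : ℕ}

def natNorm1 (x : Fin d → ℤ) : ℕ := ∑ i, (x i).natAbs

lemma norm1Z_eq_natNorm1 (x : Fin d → ℤ) : norm1Z x = natNorm1 x := by
  simp [norm1Z, natNorm1, Nat.cast_natAbs]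

lemma natNorm1_eq_zero {x : Fin d → ℤ} : natNorm1 x = 0 ↔ x = 0 := by
  simp [natNorm1, Finset.sum_eq_zero_iff, funext_iff]

lemma natNorm1_add_le (x y : Fin d → ℤ) : natNorm1 (x + y) ≤ natNorm1 x + natNorm1 y := by
  rw [natNorm1, natNorm1, natNorm1, ← Finset.sum_add_distrib]
  exact Finset.sum_le_sum fun i _ => Int.natAbs_add_le _ _

lemma natNorm1_of_mem_unitSteps {s : Fin d → ℤ} (hs : s ∈ unitSteps d) : natNorm1 s = 1 := by
  obtain ⟨⟨i, b⟩, -, rfl⟩ := Finset.mem_image.1 hs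
  cases b <;> simp [natNorm1, apply_ite]

lemma card_unitSteps (d : ℕ) : (unitSteps d).card = 2 * d := by
  rw [unitSteps, Finset.card_image_of_injective, Finset.card_univ, Fintype.card_prod,
    Fintype.card_fin, Fintype.card_bool, mul_comm]
  rintro ⟨i, b⟩ ⟨j, c⟩ h
  have hi := congrFun h i
  by_cases hij : i = j
  · subst hij
    cases b <;> cases c <;> simp_all
  · cases b <;> simp [hij] at hi

lemma exists_unitStep_natNorm1_sub {x : Fin d → ℤ} (hx : x ≠ 0) :
    ∃ s ∈ unitSteps d, natNorm1 (x - s) + 1 = natNorm1 x := by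
  obtain ⟨i, hi⟩ := Function.ne_iff.1 hx
  set s : Fin d → ℤ := fun j => if j = i then (if 0 < x i then 1 else -1) else 0
  refine ⟨s, Finset.mem_image.2 ⟨(i, decide (0 < x i)), Finset.mem_univ _, ?_⟩, ?_⟩
  · funext j; by_cases h : 0 < x i <;> simp [s, h]
  have hterm : ∀ j, ((x - s) j).natAbs + (if j = i then 1 else 0) = (x j).natAbs := by
    intro j
    by_cases hj : j = i
    · subst hj; simp only [Pi.sub_apply, s, if_true]; split_ifs <;> simp_all <;> omega
    · simp [s, hj]
  simp only [natNorm1, ← hterm, Finset.sum_add_distrib, Finset.sum_ite_eq', Finset.mem_univ,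
    if_true]

lemma exists_geodesic (x : Fin d → ℤ) :
    ∃ q : ℕ → Fin d → ℤ, q 0 = 0 ∧ q (natNorm1 x) = x ∧
      (∀ m < natNorm1 x, q (m + 1) - q m ∈ unitSteps d) ∧
      ∀ m ≤ natNorm1 x, natNorm1 (q m) = m := by
  generalize hN : natNorm1 x = N
  induction N generalizing x with
  | zero =>
    refine ⟨fun _ => 0, rfl, (natNorm1_eq_zero.1 hN).symm, fun m hm => absurd hm m.not_lt_zero,
      fun m hm => ?_⟩
    simp [Nat.le_zero.1 hm, natNorm1]
  | succ N ih =>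
    obtain ⟨s, hs, hxs⟩ := exists_unitStep_natNorm1_sub (x := x) (by
      rintro rfl; simp [natNorm1] at hN)
    obtain ⟨q, hq0, hqN, hsteps, hnorm⟩ := ih (x - s) (by omega)
    refine ⟨Function.update q (N + 1) x, by simp [hq0], by simp, fun m hm => ?_, fun m hm => ?_⟩
    · rcases Nat.lt_succ_iff_lt_or_eq.1 hm with hm | rfl
      · simpa [Function.update_of_ne (by omega : m + 1 ≠ N + 1),
          Function.update_of_ne (by omega : m ≠ N + 1)] using hsteps m hm
      · simpa [Function.update_of_ne (by omega : m ≠ m + 1), hqN] using hs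
    · rcases Nat.le_succ_iff.1 hm with hm | rfl
      · rw [Function.update_of_ne (by omega)]; exact hnorm m hm
      · simpa using hN

end Lattice

section Path

variable {d : ℕ} {Ω : Type*} {S : ℕ → Ω → Fin d → ℤ} {ω : Ω} {n : ℕ} {φ : ℝ → ℝ}

def visited (S : ℕ → Ω → Fin d → ℤ) (n : ℕ) (ω : Ω) : Finset (Fin d → ℤ) :=
  (Finset.Icc 1 n).image (S · ω)

lemma localTime_pos_iff {y : Fin d → ℤ} : 0 < localTime S y n ω ↔ y ∈ visited S n ω := by
  simp [localTime, visited, Finset.card_pos, Finset.filter_nonempty_iff]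

lemma annPotential_eq_sum_visited (hφ0 : φ 0 = 0) :
    annPotential φ S n ω = ∑ y ∈ visited S n ω, φ (localTime S y n ω) :=
  tsum_eq_sum fun y hy => by
    rw [Nat.eq_zero_of_not_pos (mt localTime_pos_iff.1 hy), Nat.cast_zero, hφ0]

lemma annPotential_nonneg (hφ0 : φ 0 = 0) (hφ : MonotoneOn φ (Ici 0)) :
    0 ≤ annPotential φ S n ω := by
  rw [annPotential_eq_sum_visited hφ0]
  exact Finset.sum_nonneg fun y _ =>
    hφ0 ▸ hφ self_mem_Ici (mem_Ici.2 (Nat.cast_nonneg _)) (Nat.cast_nonneg _)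

lemma card_visited_mul_le_annPotential (hφ0 : φ 0 = 0) (hφ : MonotoneOn φ (Ici 0)) :
    (visited S n ω).card * φ 1 ≤ annPotential φ S n ω := by
  rw [annPotential_eq_sum_visited hφ0, ← nsmul_eq_mul, ← Finset.sum_const]
  exact Finset.sum_le_sum fun y hy => hφ (mem_Ici.2 zero_le_one) (mem_Ici.2 (Nat.cast_nonneg _))
    (by exact_mod_cast localTime_pos_iff.2 hy)

lemma annPotential_eq_of_injOn (hφ0 : φ 0 = 0) (hinj : Set.InjOn (S · ω) (Finset.Icc 1 n)) :
    annPotential φ S n ω = n * φ 1 := by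
  have hlocal : ∀ y ∈ visited S n ω, localTime S y n ω = 1 := fun y hy =>
    le_antisymm (Finset.card_le_one.2 fun a ha b hb =>
        hinj (Finset.mem_filter.1 ha).1 (Finset.mem_filter.1 hb).1
          ((Finset.mem_filter.1 ha).2.trans (Finset.mem_filter.1 hb).2.symm))
      (localTime_pos_iff.2 hy)
  rw [annPotential_eq_sum_visited hφ0, Finset.sum_congr rfl fun y hy => by rw [hlocal y hy],
    Finset.sum_const, visited, Finset.card_image_of_injOn hinj, Nat.card_Icc, nsmul_eq_mul,
    Nat.add_sub_cancel]
  norm_num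

variable (h0 : S 0 ω = 0) (hstep : ∀ m, natNorm1 (S (m + 1) ω) ≤ natNorm1 (S m ω) + 1)
include h0 hstep

lemma natNorm1_le_of_increments (m : ℕ) : natNorm1 (S m ω) ≤ m := by
  induction m with
  | zero => simp [h0, natNorm1]
  | succ m ih => have := hstep m; omega

lemma natNorm1_le_card_visited : natNorm1 (S n ω) ≤ (visited S n ω).card := by
  have hsub : Finset.Icc 1 (natNorm1 (S n ω)) ⊆ (visited S n ω).image natNorm1 := by
    intro k hk
    obtain ⟨hk1, hkn⟩ := Finset.mem_Icc.1 hk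
    obtain ⟨m, hmn, hm⟩ := exists_eq_of_increments_le_one (a := fun m => natNorm1 (S m ω))
      (by simp [h0, natNorm1]) hstep hkn
    have hm0 : m ≠ 0 := by rintro rfl; simp [h0, natNorm1] at hm; omega
    exact Finset.mem_image.2
      ⟨S m ω, Finset.mem_image.2 ⟨m, Finset.mem_Icc.2 ⟨by omega, hmn⟩, rfl⟩, hm⟩
  simpa using (Finset.card_le_card hsub).trans Finset.card_image_le

end Path

section Hitting

variable {d : ℕ} {Ω : Type*} {S : ℕ → Ω → Fin d → ℤ} {ω : Ω} {x : Fin d → ℤ} {n : ℕ}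
  {φ : ℝ → ℝ} {lam : ℝ}

lemma hitTime_mem (h : ω ∈ hits S x) : S (hitTime S x ω) ω = x := Nat.sInf_mem h

lemma hitTime_eq_of_forall_ne (hn : S n ω = x) (hlt : ∀ m < n, S m ω ≠ x) :
    hitTime S x ω = n :=
  le_antisymm (Nat.sInf_le hn) (le_csInf ⟨n, hn⟩ fun m hm => not_lt.1 fun h => hlt m h hm)

def hitWeight (φ : ℝ → ℝ) (S : ℕ → Ω → Fin d → ℤ) (lam : ℝ) (x : Fin d → ℤ) (ω : Ω) : ℝ :=
  (hits S x).indicator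
    (fun ω => Real.exp (-(lam * hitTime S x ω) - annPotential φ S (hitTime S x ω) ω)) ω

lemma twoPointB_eq {_ : MeasurableSpace Ω} (P : Measure Ω) :
    twoPointB P φ S lam x = -Real.log (∫ ω, hitWeight φ S lam x ω ∂P) := rfl

lemma hitWeight_nonneg : 0 ≤ hitWeight φ S lam x ω :=
  indicator_nonneg (fun _ _ => (Real.exp_pos _).le) ω

lemma hitWeight_le_one (hlam : 0 ≤ lam) (hφ0 : φ 0 = 0) (hφ : MonotoneOn φ (Ici 0)) :
    hitWeight φ S lam x ω ≤ 1 := by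
  refine indicator_apply_le' (fun _ => Real.exp_le_one_iff.2 ?_) fun _ => zero_le_one
  have := annPotential_nonneg (S := S) (n := hitTime S x ω) (ω := ω) hφ0 hφ
  have := mul_nonneg hlam (Nat.cast_nonneg (α := ℝ) (hitTime S x ω))
  linarith

lemma hitWeight_le_exp (hlam : 0 ≤ lam) (hφ0 : φ 0 = 0) (hφ : MonotoneOn φ (Ici 0))
    (h0 : S 0 ω = 0) (hstep : ∀ m, natNorm1 (S (m + 1) ω) ≤ natNorm1 (S m ω) + 1) :
    hitWeight φ S lam x ω ≤ Real.exp (-(natNorm1 x * (lam + φ 1))) := by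
  refine indicator_apply_le' (fun hx => Real.exp_le_exp.2 ?_) fun _ => (Real.exp_pos _).le
  have hH := hitTime_mem hx
  set H := hitTime S x ω
  have hφ1 : 0 ≤ φ 1 := hφ0 ▸ hφ self_mem_Ici (mem_Ici.2 zero_le_one) zero_le_one
  have htime : lam * natNorm1 x ≤ lam * H := mul_le_mul_of_nonneg_left
    (by exact_mod_cast hH ▸ natNorm1_le_of_increments h0 hstep H) hlam
  have hpot : natNorm1 x * φ 1 ≤ annPotential φ S H ω :=
    calc natNorm1 x * φ 1 ≤ (visited S H ω).card * φ 1 := mul_le_mul_of_nonneg_right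
          (by exact_mod_cast hH ▸ natNorm1_le_card_visited h0 hstep) hφ1
      _ ≤ annPotential φ S H ω := card_visited_mul_le_annPotential hφ0 hφ
  linarith

lemma hitWeight_eq_exp_of_geodesic (hφ0 : φ 0 = 0) {q : ℕ → Fin d → ℤ}
    (hqx : q (natNorm1 x) = x) (hq : ∀ m ≤ natNorm1 x, natNorm1 (q m) = m)
    (hSq : ∀ m ≤ natNorm1 x, S m ω = q m) :
    hitWeight φ S lam x ω = Real.exp (-(natNorm1 x * (lam + φ 1))) := by
  set N := natNorm1 x
  have hnorm : ∀ m ≤ N, natNorm1 (S m ω) = m := fun m hm => hSq m hm ▸ hq m hm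
  have hH : hitTime S x ω = N := hitTime_eq_of_forall_ne (hqx ▸ hSq N le_rfl)
    fun m hm hmx => by have := hnorm m hm.le; rw [hmx] at this; omega
  have hinj : Set.InjOn (S · ω) (Finset.Icc 1 N) := fun a ha b hb hab => by
    rw [← hnorm a (Finset.mem_Icc.1 ha).2, ← hnorm b (Finset.mem_Icc.1 hb).2]
    exact congrArg natNorm1 hab
  have hhit : ω ∈ hits S x := ⟨N, hqx ▸ hSq N le_rfl⟩
  rw [hitWeight, indicator_of_mem hhit, hH, annPotential_eq_of_injOn hφ0 hinj]
  ring_nf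

end Hitting

section Measurability

variable {d : ℕ} {Ω : Type*} [MeasurableSpace Ω] {S : ℕ → Ω → Fin d → ℤ}
  (hS : ∀ n, Measurable (S n))
include hS

/-- `Φ(n)` only depends on `S 0, …, S n`, which take countably many values. -/
lemma measurable_annPotential (φ : ℝ → ℝ) (n : ℕ) : Measurable (annPotential φ S n) := by
  refine measurable_of_factorsThrough (g := fun ω (i : Fin (n + 1)) => S i ω)
    (measurable_pi_lambda _ fun i => hS i) fun ω ω' h => ?_
  have hpath : ∀ m ≤ n, S m ω = S m ω' := fun m hm => congrFun h ⟨m, Nat.lt_succ_of_le hm⟩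
  refine tsum_congr fun y => ?_
  simp only [localTime]
  congr 3
  exact Finset.filter_congr fun m hm => by rw [hpath m (Finset.mem_Icc.1 hm).2]

lemma measurableSet_hits (x : Fin d → ℤ) : MeasurableSet (hits S x) := by
  rw [hits, ofPred_exists]
  exact MeasurableSet.iUnion fun n => hS n (measurableSet_singleton x)

/-- `hitTime S x` is `Nat.find` for `S n ω = x ∨ ω ∉ hits S x`, since `sInf ∅ = 0`. -/
lemma measurable_hitTime (x : Fin d → ℤ) : Measurable (hitTime S x) := by
  classical
  have hex : ∀ ω, ∃ n, S n ω = x ∨ ω ∉ hits S x := fun ω => by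
    by_cases h : ω ∈ hits S x
    · obtain ⟨n, hn⟩ := h
      exact ⟨n, .inl hn⟩
    · exact ⟨0, .inr h⟩
  have : hitTime S x = fun ω => Nat.find (hex ω) := by
    funext ω
    by_cases h : ω ∈ hits S x
    · exact le_antisymm (Nat.sInf_le ((Nat.find_spec (hex ω)).resolve_right (not_not.2 h)))
        (Nat.find_min' _ (.inl (hitTime_mem h)))
    · rw [(Nat.find_eq_zero _).2 (.inr h), hitTime, Nat.sInf_eq_zero]
      exact .inr (eq_empty_of_forall_notMem fun n hn => h ⟨n, hn⟩)
  rw [this]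
  exact measurable_find hex fun n =>
    (hS n (measurableSet_singleton x)).union (measurableSet_hits hS x).compl

lemma measurable_hitWeight (φ : ℝ → ℝ) (lam : ℝ) (x : Fin d → ℤ) :
    Measurable (hitWeight φ S lam x) := by
  have hjoint : Measurable fun p : Ω × ℕ =>
      Real.exp (-(lam * p.2) - annPotential φ S p.2 p.1) :=
    measurable_from_prod_countable_left fun n =>
      ((measurable_annPotential hS φ n).const_sub (-(lam * n))).exp
  exact (hjoint.comp (measurable_id.prodMk (measurable_hitTime hS x))).indicator
    (measurableSet_hits hS x)

end Measurability

lemma stepDist_singleton {d : ℕ} {s : Fin d → ℤ} (hs : s ∈ unitSteps d) :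
    stepDist d {s} = ((2 * d : ℕ) : ENNReal)⁻¹ := by
  simp [stepDist, Measure.finsetSum_apply, hs, card_unitSteps]

lemma stepDist_compl_unitSteps (d : ℕ) : stepDist d (unitSteps d : Set (Fin d → ℤ))ᶜ = 0 := by
  simp [stepDist, Measure.finsetSum_apply]

namespace IsSRW

variable {d : ℕ} {Ω : Type*} [MeasurableSpace Ω] {P : Measure Ω} {S : ℕ → Ω → Fin d → ℤ}
  {φ : ℝ → ℝ} {lam : ℝ}

lemma measurable_increment (hS : IsSRW P S) (n : ℕ) :
    Measurable fun ω => S (n + 1) ω - S n ω :=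
  (hS.2.1 (n + 1)).sub (hS.2.1 n)

lemma ae_increment_mem_unitSteps (hS : IsSRW P S) :
    ∀ᵐ ω ∂P, ∀ n, S (n + 1) ω - S n ω ∈ unitSteps d := by
  refine ae_all_iff.2 fun n => ae_of_ae_map (hS.measurable_increment n).aemeasurable ?_
  rw [hS.2.2.1 n, ae_iff]
  exact stepDist_compl_unitSteps d

lemma measure_increments_eq (hS : IsSRW P S) {N : ℕ} {s : ℕ → Fin d → ℤ}
    (hs : ∀ m < N, s m ∈ unitSteps d) :
    P (⋂ m ∈ Finset.range N, (fun ω => S (m + 1) ω - S m ω) ⁻¹' {s m}) =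
      ((2 * d : ℕ) : ENNReal)⁻¹ ^ N := by
  rw [hS.2.2.2.measure_inter_preimage_eq_mul _ fun _ _ => measurableSet_singleton _,
    Finset.prod_congr rfl fun m hm => ?_, Finset.prod_const, Finset.card_range]
  rw [← Measure.map_apply (hS.measurable_increment m) (measurableSet_singleton _), hS.2.2.1 m,
    stepDist_singleton (hs m (Finset.mem_range.1 hm))]

lemma integrable_hitWeight [IsFiniteMeasure P] (hS : IsSRW P S) (hlam : 0 ≤ lam)
    (hφ0 : φ 0 = 0) (hφ : MonotoneOn φ (Ici 0)) (x : Fin d → ℤ) :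
    Integrable (hitWeight φ S lam x) P :=
  .of_bound (measurable_hitWeight hS.2.1 φ lam x).aestronglyMeasurable 1 <| .of_forall fun _ => by
    rw [Real.norm_of_nonneg hitWeight_nonneg]
    exact hitWeight_le_one hlam hφ0 hφ

lemma integral_hitWeight_le [IsProbabilityMeasure P] (hS : IsSRW P S) (hlam : 0 ≤ lam)
    (hφ0 : φ 0 = 0) (hφ : MonotoneOn φ (Ici 0)) (x : Fin d → ℤ) :
    ∫ ω, hitWeight φ S lam x ω ∂P ≤ Real.exp (-(natNorm1 x * (lam + φ 1))) := by
  have hbound : ∀ᵐ ω ∂P, hitWeight φ S lam x ω ≤ Real.exp (-(natNorm1 x * (lam + φ 1))) := by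
    filter_upwards [hS.ae_increment_mem_unitSteps] with ω hω
    refine hitWeight_le_exp hlam hφ0 hφ (hS.1 ω) fun m => ?_
    have := natNorm1_add_le (S m ω) (S (m + 1) ω - S m ω)
    rwa [add_sub_cancel, natNorm1_of_mem_unitSteps (hω m)] at this
  simpa using integral_mono_of_nonneg (.of_forall fun _ => hitWeight_nonneg)
    (integrable_const _) hbound

lemma le_integral_hitWeight [IsFiniteMeasure P] (hS : IsSRW P S) (hlam : 0 ≤ lam)
    (hφ0 : φ 0 = 0) (hφ : MonotoneOn φ (Ici 0)) (x : Fin d → ℤ) :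
    (2 * d : ℝ)⁻¹ ^ natNorm1 x * Real.exp (-(natNorm1 x * (lam + φ 1))) ≤
      ∫ ω, hitWeight φ S lam x ω ∂P := by
  obtain ⟨q, hq0, hqx, hsteps, hq⟩ := exists_geodesic x
  set N := natNorm1 x
  set A := ⋂ m ∈ Finset.range N, (fun ω => S (m + 1) ω - S m ω) ⁻¹' {q (m + 1) - q m}
  have hA : MeasurableSet A := (Finset.range N).measurableSet_biInter fun m _ =>
    hS.measurable_increment m (measurableSet_singleton _)
  have hSq : ∀ ω ∈ A, ∀ m ≤ N, S m ω = q m := fun ω hω m hm => by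
    induction m with
    | zero => rw [hS.1, hq0]
    | succ m ih =>
      have hinc : S (m + 1) ω - S m ω = q (m + 1) - q m :=
        mem_iInter₂.1 hω m (Finset.mem_range.2 hm)
      rw [← sub_add_cancel (S (m + 1) ω) (S m ω), hinc, ih (by omega), sub_add_cancel]
  calc (2 * d : ℝ)⁻¹ ^ N * Real.exp (-(N * (lam + φ 1)))
      = ∫ ω, A.indicator (fun _ => Real.exp (-(N * (lam + φ 1)))) ω ∂P := by
        rw [integral_indicator_const _ hA, measureReal_def, hS.measure_increments_eq hsteps,
          smul_eq_mul]
        simp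
    _ ≤ ∫ ω, hitWeight φ S lam x ω ∂P :=
        integral_mono_of_nonneg
          (.of_forall fun _ => indicator_nonneg (fun _ _ => (Real.exp_pos _).le) _)
          (hS.integrable_hitWeight hlam hφ0 hφ x) (.of_forall fun ω => indicator_apply_le'
            (fun hω => (hitWeight_eq_exp_of_geodesic hφ0 hqx hq (hSq ω hω)).ge)
            fun _ => hitWeight_nonneg)

end IsSRW

/-- **Bounds on the annealed two-point function** (Flury, (4)–(5)). For every `λ ≥ 0`
and `x ∈ ℤ^d`, `‖x‖₁(λ + φ(1)) ≤ b_λ(x) ≤ ‖x‖₁(λ + log(2d) + φ(1))`. -/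
theorem annealed_two_point_bounds
    {d : ℕ} (hd : 0 < d)
    {Ω : Type*} [MeasurableSpace Ω] (P : Measure Ω) [IsProbabilityMeasure P]
    (S : ℕ → Ω → Fin d → ℤ) (hS : IsSRW P S)
    (φ : ℝ → ℝ) (hφ : IsGoodPhi φ) :
    ∀ lam : ℝ, 0 ≤ lam → ∀ x : Fin d → ℤ,
      norm1Z x * (lam + φ 1) ≤ twoPointB P φ S lam x ∧
        twoPointB P φ S lam x ≤ norm1Z x * (lam + Real.log (2 * (d : ℝ)) + φ 1) := by
  intro lam hlam x
  obtain ⟨hφ0, -, hφ, -⟩ := hφ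
  have hupper := hS.integral_hitWeight_le hlam hφ0 hφ x
  have hlower := hS.le_integral_hitWeight hlam hφ0 hφ x
  have hpath : 0 < (2 * d : ℝ)⁻¹ ^ natNorm1 x := by positivity
  have hpos := (mul_pos hpath (Real.exp_pos _)).trans_le hlower
  rw [twoPointB_eq, norm1Z_eq_natNorm1]
  constructor
  · have := Real.log_le_log hpos hupper
    rw [Real.log_exp] at this
    linarith
  · have := Real.log_le_log (mul_pos hpath (Real.exp_pos _)) hlower
    rw [Real.log_mul hpath.ne' (Real.exp_pos _).ne', Real.log_pow, Real.log_inv,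
      Real.log_exp] at this
    linarith

end RWRP
end
end

section
/- For every h ∈ ℝ^d: sup_{x∈ℝ^d}(h·x − I(x)) = 0 if α*₀(h) ≤ 1, and sup_{x∈ℝ^d}(h·x − I(x)) = λ^{qu}_h if α*₀(h) > 1, where λ^{qu}_h is the unique λ > 0 with α*_λ(h) = 1 (such a λ exists and is unique when α*₀(h) > 1). -/
open MeasureTheory ProbabilityTheory Filter Topology Set Pointwise

noncomputable section

namespace RWRP

/-! The Lyapunov norms grow like `λ‖x‖₁`, so the set of `λ ≥ 0` with `h·x ≤ α_λ(x)` for all `x`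
(that is, `α*_λ(h) ≤ 1`) is closed and contains all large `λ`; let `λ₀` be its least element.
The free energy equals `λ₀`: each such `λ` gives `h·x − I(x) ≤ λ`, while for `λ₁ < λ₂ < λ₀` a point
`x` with `α_{λ₂}(x) < h·x`, divided by the secant slope of the concave map `λ ↦ α_λ(x)` on
`[λ₁, λ₂]`, has `h·x − I(x) ≥ λ₁`.

Concavity and the linear bounds on `α_λ` also show that `λ ↦ α_λ(x)` increases at rate at least
`‖x‖₁` and is Lipschitz near every `λ > 0` with constant `O(‖x‖₁)`. Hence `α*_λ(h) < 1` for
`λ > λ₀`, and `α*_{λ₀}(h) < 1` would push `λ₀` further down unless `λ₀ = 0`; so when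
`α*₀(h) > 1`, `λ₀` is the unique positive solution of `α*_λ(h) = 1`. -/

theorem log_integral_exp_neg_lt_zero {Ω : Type*} [MeasurableSpace Ω] {μ : Measure Ω}
    [IsProbabilityMeasure μ] {X : Ω → ℝ} (hX : Measurable X) (hX₀ : 0 ≤ᵐ[μ] X)
    (hX₁ : ¬X =ᵐ[μ] 0) : Real.log (∫ ω, Real.exp (-X ω) ∂μ) < 0 := by
  have hle : ∀ᵐ ω ∂μ, Real.exp (-X ω) ≤ 1 := by
    filter_upwards [hX₀] with ω hω
    exact Real.exp_le_one_iff.2 (neg_nonpos.2 hω)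
  have hint : Integrable (fun ω => Real.exp (-X ω)) μ := by
    refine (integrable_const (1 : ℝ)).mono' (by fun_prop) ?_
    filter_upwards [hle] with ω hω
    rwa [Real.norm_of_nonneg (Real.exp_pos _).le]
  have hgap : 0 < ∫ ω, (1 - Real.exp (-X ω)) ∂μ := by
    rw [integral_pos_iff_support_of_nonneg_ae (f := fun ω => 1 - Real.exp (-X ω))
      (by filter_upwards [hle] with ω hω; simpa using hω) ((integrable_const 1).sub hint)]
    have hsupp : μ {ω | ¬X ω = 0} ≠ 0 := fun h0 => hX₁ (ae_iff.2 h0)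
    convert pos_iff_ne_zero.2 hsupp using 2
    ext ω
    simp [sub_eq_zero, eq_comm (a := (1 : ℝ)), Real.exp_eq_one_iff]
  rw [integral_sub (integrable_const 1) hint, integral_const, probReal_univ, one_smul,
    sub_pos] at hgap
  exact Real.log_neg (integral_exp_pos hint) hgap

section Dual

variable {d : ℕ}

theorem norm1R_nonneg (x : Fin d → ℝ) : 0 ≤ norm1R x :=
  Finset.sum_nonneg fun i _ => abs_nonneg (x i)

theorem norm1R_pos {x : Fin d → ℝ} (hx : x ≠ 0) : 0 < norm1R x := by
  obtain ⟨i, hi⟩ := Function.ne_iff.1 hx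
  exact Finset.sum_pos' (fun j _ => abs_nonneg (x j)) ⟨i, Finset.mem_univ i, abs_pos.2 hi⟩

theorem dotR_zero (h : Fin d → ℝ) : dotR h 0 = 0 := by simp [dotR]

theorem dotR_smul (h : Fin d → ℝ) (t : ℝ) (x : Fin d → ℝ) : dotR h (t • x) = t * dotR h x := by
  simp only [dotR, Pi.smul_apply, smul_eq_mul, Finset.mul_sum]
  exact Finset.sum_congr rfl fun i _ => mul_left_comm _ _ _

theorem dotR_le_norm1R_mul (h x : Fin d → ℝ) : dotR h x ≤ norm1R h * norm1R x := by
  rw [norm1R, Finset.sum_mul]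
  refine Finset.sum_le_sum fun i _ => ?_
  calc h i * x i ≤ |h i| * |x i| := (le_abs_self _).trans (abs_mul _ _).le
    _ ≤ |h i| * norm1R x := mul_le_mul_of_nonneg_left
        (Finset.single_le_sum (fun j _ => abs_nonneg (x j)) (Finset.mem_univ i)) (abs_nonneg _)

theorem IsNorm.map_zero {f : (Fin d → ℝ) → ℝ} (hf : IsNorm f) : f 0 = 0 :=
  (hf.2.1 0).2 rfl

theorem IsNorm.map_smul {f : (Fin d → ℝ) → ℝ} (hf : IsNorm f) (t : ℝ) (x : Fin d → ℝ) :
    f (t • x) = |t| * f x :=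
  hf.2.2.1 t x

theorem dualNorm_le_iff {f : (Fin d → ℝ) → ℝ} (hf : IsNorm f) {c : ℝ} (hc : 0 < c)
    (hfc : ∀ x, norm1R x * c ≤ f x) (h : Fin d → ℝ) {g : ℝ} (hg : 0 ≤ g) :
    dualNorm f h ≤ g ↔ ∀ x, dotR h x ≤ g * f x := by
  have hpos : ∀ x : Fin d → ℝ, x ≠ 0 → 0 < f x := fun x hx =>
    lt_of_lt_of_le (mul_pos (norm1R_pos hx) hc) (hfc x)
  refine ⟨fun hle x => ?_, fun hx => Real.iSup_le (fun x => ?_) hg⟩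
  · rcases eq_or_ne x 0 with rfl | hx
    · simp [dotR_zero, hf.map_zero]
    have hbdd : BddAbove (range fun y : {y : Fin d → ℝ // y ≠ 0} => dotR h y.1 / f y.1) := by
      refine ⟨norm1R h / c, ?_⟩
      rintro _ ⟨y, rfl⟩
      rw [div_le_div_iff₀ (hpos y.1 y.2) hc]
      calc dotR h y.1 * c ≤ norm1R h * norm1R y.1 * c :=
            mul_le_mul_of_nonneg_right (dotR_le_norm1R_mul h y.1) hc.le
        _ ≤ norm1R h * f y.1 := by
            rw [mul_assoc]
            exact mul_le_mul_of_nonneg_left (hfc y.1) (norm1R_nonneg h)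
    have := (le_ciSup hbdd ⟨x, hx⟩).trans hle
    rwa [div_le_iff₀ (hpos x hx)] at this
  · rw [div_le_iff₀ (hpos x.1 x.2)]
    exact hx x.1

end Dual

theorem ConcaveOn.mul_sub_le_sub_of_affine_le {g : ℝ → ℝ} (hg : ConcaveOn ℝ (Ici 0) g) {a b : ℝ}
    (hab : ∀ u, 0 ≤ u → a * u + b ≤ g u) {s t : ℝ} (hs : 0 ≤ s) (hst : s ≤ t) :
    a * (t - s) ≤ g t - g s := by
  rcases hst.eq_or_lt with rfl | hst
  · simp
  set m := (g t - g s) / (t - s)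
  suffices a ≤ m by
    have := mul_le_mul_of_nonneg_right this (sub_nonneg.2 hst.le)
    rwa [div_mul_cancel₀ _ (sub_ne_zero.2 hst.ne')] at this
  -- Otherwise `g` would lie below a line of slope `m < a` on `[t, ∞)`.
  by_contra! hm
  set K := g t - m * t - b
  have hbound : ∀ u, t < u → (a - m) * u ≤ K := fun u htu => by
    have := hg.slope_anti_adjacent (mem_Ici.2 hs) (mem_Ici.2 (by linarith)) hst htu
    rw [div_le_iff₀ (sub_pos.2 htu)] at this
    nlinarith [hab u (by linarith)]
  set u := max (t + 1) ((K + 1) / (a - m))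
  have hu := hbound u ((lt_add_one t).trans_le (le_max_left _ _))
  have hKu : (K + 1) / (a - m) ≤ u := le_max_right _ _
  rw [div_le_iff₀ (sub_pos.2 hm)] at hKu
  nlinarith

theorem ConcaveOn.le_add_slope_mul_sub {g : ℝ → ℝ} (hg : ConcaveOn ℝ (Ici 0) g)
    (hmono : MonotoneOn g (Ici 0)) {a b t : ℝ} (ha : 0 ≤ a) (hab : a < b) (ht : 0 ≤ t) :
    g t ≤ g b + slope g a b * (t - a) := by
  have hb : 0 ≤ b := ha.trans hab.le
  rw [slope_def_field]
  set s := (g b - g a) / (b - a)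
  have hs : 0 ≤ s := div_nonneg (sub_nonneg.2 (hmono ha hb hab.le)) (sub_pos.2 hab).le
  rcases lt_or_ge t a with hta | hat
  · have := hg.slope_anti_adjacent (mem_Ici.2 ht) (mem_Ici.2 hb) hta hab
    rw [le_div_iff₀ (sub_pos.2 hta)] at this
    nlinarith [hmono ha hb hab.le]
  rcases le_or_gt t b with htb | hbt
  · nlinarith [hmono ht hb htb, mul_nonneg hs (sub_nonneg.2 hat)]
  · have := hg.slope_anti_adjacent (mem_Ici.2 ha) (mem_Ici.2 ht) hab hbt
    rw [div_le_iff₀ (sub_pos.2 hbt)] at this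
    nlinarith [mul_nonneg hs (sub_nonneg.2 hab.le)]

section LyapunovFamily

variable {d : ℕ} {α : ℝ → (Fin d → ℝ) → ℝ} {c C : ℝ}

/-- `{λ ≥ 0 | α*_λ(h) ≤ 1}`, stated without the dual norm; `λ^{qu}_h` is its least element. -/
def dominationSet (α : ℝ → (Fin d → ℝ) → ℝ) (h : Fin d → ℝ) : Set ℝ :=
  {lam | 0 ≤ lam ∧ ∀ x, dotR h x ≤ α lam x}

theorem norm1R_mul_sub_le_sub (hconc : ∀ x, ConcaveOn ℝ (Ici 0) fun lam => α lam x)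
    (hlow : ∀ lam, 0 ≤ lam → ∀ x, norm1R x * (lam + c) ≤ α lam x) (x : Fin d → ℝ) {s t : ℝ}
    (hs : 0 ≤ s) (hst : s ≤ t) : norm1R x * (t - s) ≤ α t x - α s x :=
  ConcaveOn.mul_sub_le_sub_of_affine_le (hconc x)
    (fun u hu => by rw [← mul_add]; exact hlow u hu x) hs hst

theorem sub_le_mul_norm1R (hconc : ∀ x, ConcaveOn ℝ (Ici 0) fun lam => α lam x)
    (hlow : ∀ lam, 0 ≤ lam → ∀ x, norm1R x * (lam + c) ≤ α lam x)
    (hup : ∀ lam, 0 ≤ lam → ∀ x, α lam x ≤ norm1R x * (lam + C)) (x : Fin d → ℝ) {s t : ℝ}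
    (hs : 0 < s) (hst : s ≤ t) : α t x - α s x ≤ (t - s) * (1 + |C - c| / s) * norm1R x := by
  rcases hst.eq_or_lt with rfl | hst
  · simp
  have hslope := (hconc x).slope_anti_adjacent (mem_Ici.2 le_rfl)
    (mem_Ici.2 (hs.le.trans hst.le)) hs hst
  rw [sub_zero, div_le_iff₀ (sub_pos.2 hst)] at hslope
  have hchord : (α s x - α 0 x) / s ≤ (1 + |C - c| / s) * norm1R x := by
    rw [div_le_iff₀ hs, mul_right_comm, add_mul, one_mul, div_mul_cancel₀ _ hs.ne']
    nlinarith [hlow 0 le_rfl x, hup s hs.le x, le_abs_self (C - c), norm1R_nonneg x]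
  calc α t x - α s x ≤ (α s x - α 0 x) / s * (t - s) := hslope
    _ ≤ (1 + |C - c| / s) * norm1R x * (t - s) :=
        mul_le_mul_of_nonneg_right hchord (sub_nonneg.2 hst.le)
    _ = (t - s) * (1 + |C - c| / s) * norm1R x := by ring

theorem isClosed_dominationSet (hcont : ∀ x, ContinuousOn (fun lam => α lam x) (Ici 0))
    (h : Fin d → ℝ) : IsClosed (dominationSet α h) := by
  have : dominationSet α h = ⋂ x, {lam ∈ Ici 0 | dotR h x ≤ α lam x} := by
    ext lam
    simp [dominationSet, forall_and]
  rw [this]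
  exact isClosed_iInter fun x => isClosed_Ici.isClosed_le continuousOn_const (hcont x)

theorem exists_isLeast_dominationSet (hcont : ∀ x, ContinuousOn (fun lam => α lam x) (Ici 0))
    (hlow : ∀ lam, 0 ≤ lam → ∀ x, norm1R x * (lam + c) ≤ α lam x) (hc : 0 ≤ c)
    (h : Fin d → ℝ) : ∃ lam, IsLeast (dominationSet α h) lam := by
  have hne : (dominationSet α h).Nonempty := by
    refine ⟨norm1R h, norm1R_nonneg h, fun x => ?_⟩
    calc dotR h x ≤ norm1R h * norm1R x := dotR_le_norm1R_mul h x
      _ ≤ norm1R x * (norm1R h + c) := by nlinarith [norm1R_nonneg x]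
      _ ≤ α (norm1R h) x := hlow _ (norm1R_nonneg h) x
  exact ⟨_, (isClosed_dominationSet hcont h).isLeast_csInf hne ⟨0, fun _ hlam => hlam.1⟩⟩

theorem exists_lt_one_dotR_le_mul (hconc : ∀ x, ConcaveOn ℝ (Ici 0) fun lam => α lam x)
    (hlow : ∀ lam, 0 ≤ lam → ∀ x, norm1R x * (lam + c) ≤ α lam x)
    (hup : ∀ lam, 0 ≤ lam → ∀ x, α lam x ≤ norm1R x * (lam + C)) {h : Fin d → ℝ} {lam t : ℝ}
    (hlam : lam ∈ dominationSet α h) (hlt : lam < t) :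
    ∃ g, 0 ≤ g ∧ g < 1 ∧ ∀ x, dotR h x ≤ g * α t x := by
  have hlam0 := hlam.1
  set M := t + |C| + 1
  have hM : t < M := by linarith [abs_nonneg C]
  refine ⟨1 - (t - lam) / M, ?_, ?_, fun x => ?_⟩
  · rw [sub_nonneg, div_le_one (by linarith)]
    linarith
  · linarith [div_pos (sub_pos.2 hlt) (by linarith : 0 < M)]
  · have hupM : α t x ≤ norm1R x * M := (hup t (by linarith) x).trans
      (mul_le_mul_of_nonneg_left (by linarith [le_abs_self C]) (norm1R_nonneg x))
    have hshare : (t - lam) / M * α t x ≤ norm1R x * (t - lam) := by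
      rw [div_mul_eq_mul_div, div_le_iff₀ (by linarith)]
      nlinarith
    nlinarith [hlam.2 x, norm1R_mul_sub_le_sub hconc hlow x hlam0 hlt.le]

theorem exists_mem_dominationSet_lt (hconc : ∀ x, ConcaveOn ℝ (Ici 0) fun lam => α lam x)
    (hlow : ∀ lam, 0 ≤ lam → ∀ x, norm1R x * (lam + c) ≤ α lam x)
    (hup : ∀ lam, 0 ≤ lam → ∀ x, α lam x ≤ norm1R x * (lam + C)) (hc : 0 < c)
    {h : Fin d → ℝ} {lam g : ℝ} (hlam : 0 < lam) (hg₀ : 0 ≤ g) (hg₁ : g < 1)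
    (hdom : ∀ x, dotR h x ≤ g * α lam x) : ∃ s < lam, s ∈ dominationSet α h := by
  set K := 1 + 2 * |C - c| / lam
  have hK : 0 < K := by positivity
  set ε := min (lam / 2) ((1 - g) * c / K)
  have hε : 0 < ε := lt_min (by linarith) (div_pos (mul_pos (by linarith) hc) hK)
  have hεK : ε * K ≤ (1 - g) * c := (le_div_iff₀ hK).1 (min_le_right _ _)
  set s := lam - ε
  have hs : lam / 2 ≤ s := by linarith [min_le_left (lam / 2) ((1 - g) * c / K)]
  have hs₀ : 0 < s := by linarith
  refine ⟨s, by linarith, hs₀.le, fun x => ?_⟩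
  have hN := norm1R_nonneg x
  have hKs : 1 + |C - c| / s ≤ K := by
    have : |C - c| / s ≤ 2 * |C - c| / lam := by
      rw [div_le_div_iff₀ hs₀ hlam]
      nlinarith [abs_nonneg (C - c)]
    linarith
  have hcN : norm1R x * c ≤ α s x := by nlinarith [hlow s hs₀.le x]
  have hlip : α lam x ≤ α s x + ε * K * norm1R x := by
    have := sub_le_mul_norm1R hconc hlow hup x hs₀ (by linarith : s ≤ lam)
    rw [show lam - s = ε by ring] at this
    nlinarith [mul_le_mul_of_nonneg_left hKs (mul_nonneg hε.le hN)]
  have hgrow : α lam x ≤ (2 - g) * α s x := by nlinarith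
  calc dotR h x ≤ g * α lam x := hdom x
    _ ≤ g * ((2 - g) * α s x) := mul_le_mul_of_nonneg_left hgrow hg₀
    _ ≤ α s x := by nlinarith [mul_nonneg (sq_nonneg (1 - g)) ((mul_nonneg hN hc.le).trans hcN)]

theorem dualNorm_eq_one_iff_isLeast (hnorm : ∀ lam, 0 ≤ lam → IsNorm (α lam))
    (hconc : ∀ x, ConcaveOn ℝ (Ici 0) fun lam => α lam x)
    (hlow : ∀ lam, 0 ≤ lam → ∀ x, norm1R x * (lam + c) ≤ α lam x)
    (hup : ∀ lam, 0 ≤ lam → ∀ x, α lam x ≤ norm1R x * (lam + C)) (hc : 0 < c)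
    {h : Fin d → ℝ} {lam : ℝ} (hlam : 0 < lam) :
    dualNorm (α lam) h = 1 ↔ IsLeast (dominationSet α h) lam := by
  have hdual : ∀ {g : ℝ}, 0 ≤ g → (dualNorm (α lam) h ≤ g ↔ ∀ x, dotR h x ≤ g * α lam x) :=
    fun hg => dualNorm_le_iff (hnorm lam hlam.le) (by positivity) (hlow lam hlam.le) h hg
  have hmem : dualNorm (α lam) h ≤ 1 ↔ lam ∈ dominationSet α h := by
    simp [dominationSet, hlam.le, hdual zero_le_one]
  constructor
  · intro hone
    refine ⟨hmem.1 hone.le, fun s hs => le_of_not_gt fun hslam => ?_⟩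
    obtain ⟨g, hg₀, hg₁, hg⟩ := exists_lt_one_dotR_le_mul hconc hlow hup hs hslam
    linarith [(hdual hg₀).2 hg]
  · intro hleast
    refine le_antisymm (hmem.2 hleast.1) (le_of_not_gt fun hlt => ?_)
    have hg₀ : 0 ≤ max (dualNorm (α lam) h) 0 := le_max_right _ _
    obtain ⟨s, hslam, hs⟩ := exists_mem_dominationSet_lt hconc hlow hup hc hlam hg₀
      (max_lt hlt one_pos) ((hdual hg₀).1 (le_max_left _ _))
    exact (hleast.2 hs).not_gt hslam

theorem coe_sub_le_rateFn {x : Fin d → ℝ} {lam : ℝ} (hlam : 0 ≤ lam) :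
    ((α lam x - lam : ℝ) : EReal) ≤ rateFn α x :=
  le_iSup₂ (f := fun (lam : ℝ) (_ : 0 ≤ lam) => ((α lam x - lam : ℝ) : EReal)) lam hlam

theorem rateFn_le_coe {x : Fin d → ℝ} {r : ℝ} (hr : ∀ lam, 0 ≤ lam → α lam x - lam ≤ r) :
    rateFn α x ≤ r :=
  iSup₂_le fun lam hlam => EReal.coe_le_coe_iff.2 (hr lam hlam)

theorem freeEnergySup_le_of_mem {h : Fin d → ℝ} {lam : ℝ} (hlam : lam ∈ dominationSet α h) :
    freeEnergySup α h ≤ lam :=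
  iSup_le fun x => calc
    ((dotR h x : ℝ) : EReal) - rateFn α x
        ≤ ((dotR h x : ℝ) : EReal) - ((α lam x - lam : ℝ) : EReal) := EReal.sub_le_sub le_rfl (coe_sub_le_rateFn hlam.1)
    _ = ((dotR h x - (α lam x - lam) : ℝ) : EReal) := (EReal.coe_sub _ _).symm
    _ ≤ lam := EReal.coe_le_coe_iff.2 (by linarith [hlam.2 x])

theorem zero_le_freeEnergySup (hnorm : ∀ lam, 0 ≤ lam → IsNorm (α lam)) (h : Fin d → ℝ) :
    0 ≤ freeEnergySup α h := by
  have hrate : rateFn α 0 ≤ ((0 : ℝ) : EReal) :=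
    rateFn_le_coe fun lam hlam => by rw [(hnorm lam hlam).map_zero]; linarith
  refine le_iSup_of_le 0 ?_
  calc (0 : EReal) = ((0 : ℝ) : EReal) - ((0 : ℝ) : EReal) := by simp
    _ ≤ _ := EReal.sub_le_sub (by rw [dotR_zero]) hrate

theorem le_freeEnergySup_of_lt (hnorm : ∀ lam, 0 ≤ lam → IsNorm (α lam))
    (hconc : ∀ x, ConcaveOn ℝ (Ici 0) fun lam => α lam x)
    (hlow : ∀ lam, 0 ≤ lam → ∀ x, norm1R x * (lam + c) ≤ α lam x) {h x : Fin d → ℝ}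
    {lam₁ lam₂ : ℝ} (h₁ : 0 ≤ lam₁) (h₁₂ : lam₁ < lam₂) (hx : α lam₂ x < dotR h x) :
    (lam₁ : EReal) ≤ freeEnergySup α h := by
  have hx₀ : x ≠ 0 := by
    rintro rfl
    simp [dotR_zero, (hnorm lam₂ (by linarith)).map_zero] at hx
  have hgap := norm1R_mul_sub_le_sub hconc hlow x h₁ h₁₂.le
  set s := slope (fun lam => α lam x) lam₁ lam₂ with hs_def
  have hs : 0 < s := by
    rw [hs_def, slope_def_field]
    exact div_pos ((mul_pos (norm1R_pos hx₀) (sub_pos.2 h₁₂)).trans_le hgap) (sub_pos.2 h₁₂)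
  have hmono : MonotoneOn (fun lam => α lam x) (Ici 0) := fun a ha b _ hab =>
    sub_nonneg.1 ((mul_nonneg (norm1R_nonneg x) (sub_nonneg.2 hab)).trans
      (norm1R_mul_sub_le_sub hconc hlow x ha hab))
  have hrate : rateFn α (s⁻¹ • x) ≤ ((s⁻¹ * α lam₂ x - lam₁ : ℝ) : EReal) := by
    refine rateFn_le_coe fun lam hlam => ?_
    rw [(hnorm lam hlam).map_smul, abs_of_pos (inv_pos.2 hs)]
    have := mul_le_mul_of_nonneg_left
      (ConcaveOn.le_add_slope_mul_sub (hconc x) hmono h₁ h₁₂ hlam) (inv_pos.2 hs).le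
    rw [mul_add, ← mul_assoc, inv_mul_cancel₀ hs.ne', one_mul] at this
    linarith
  refine le_iSup_of_le (s⁻¹ • x) ?_
  calc (lam₁ : EReal) ≤ ((dotR h (s⁻¹ • x) - (s⁻¹ * α lam₂ x - lam₁) : ℝ) : EReal) := by
        rw [EReal.coe_le_coe_iff, dotR_smul]
        nlinarith [mul_lt_mul_of_pos_left hx (inv_pos.2 hs)]
    _ = ((dotR h (s⁻¹ • x) : ℝ) : EReal) - ((s⁻¹ * α lam₂ x - lam₁ : ℝ) : EReal) :=
        EReal.coe_sub _ _
    _ ≤ _ := EReal.sub_le_sub le_rfl hrate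

theorem freeEnergySup_eq_of_isLeast (hnorm : ∀ lam, 0 ≤ lam → IsNorm (α lam))
    (hconc : ∀ x, ConcaveOn ℝ (Ici 0) fun lam => α lam x)
    (hlow : ∀ lam, 0 ≤ lam → ∀ x, norm1R x * (lam + c) ≤ α lam x) {h : Fin d → ℝ} {lam : ℝ}
    (hlam : IsLeast (dominationSet α h) lam) : freeEnergySup α h = lam := by
  refine le_antisymm (freeEnergySup_le_of_mem hlam.1) (le_of_forall_lt_imp_le_of_dense ?_)
  intro a ha
  induction a using EReal.rec with
  | bot => exact bot_le
  | top => exact absurd ha (not_lt.2 le_top)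
  | coe r =>
    rcases le_or_gt r 0 with hr | hr
    · exact (EReal.coe_le_coe_iff.2 hr).trans (zero_le_freeEnergySup hnorm h)
    have hrlam : r < lam := EReal.coe_lt_coe_iff.1 ha
    have hmid : (r + lam) / 2 ∉ dominationSet α h := fun hmem =>
      (hlam.2 hmem).not_gt (by linarith)
    obtain ⟨x, hx⟩ : ∃ x, α ((r + lam) / 2) x < dotR h x := by
      simpa [dominationSet, (by linarith : 0 ≤ (r + lam) / 2)] using hmid
    exact le_freeEnergySup_of_lt hnorm hconc hlow hr.le (by linarith) hx

end LyapunovFamily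

theorem quenched_free_energy_identification_general
    {d : ℕ}
    {Ωe : Type*} [MeasurableSpace Ωe] (μ : Measure Ωe) [IsProbabilityMeasure μ]
    (V : (Fin d → ℤ) → Ωe → ℝ) (hV : IsIIDPotential μ V)
    (α : ℝ → (Fin d → ℝ) → ℝ)
    (hαnorm : ∀ lam : ℝ, 0 ≤ lam → IsNorm (α lam))
    (hαcont : ContinuousOn (fun p : ℝ × (Fin d → ℝ) => α p.1 p.2) (Ici 0 ×ˢ univ))
    (hαconc : ∀ x : Fin d → ℝ, ConcaveOn ℝ (Ici 0) (fun lam => α lam x))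
    (hαbounds : ∀ lam : ℝ, 0 ≤ lam → ∀ x : Fin d → ℝ,
      norm1R x * (lam - Real.log (∫ ωe, Real.exp (-V 0 ωe) ∂μ)) ≤ α lam x ∧
        α lam x ≤ norm1R x * (lam + Real.log (2 * (d : ℝ)) + ∫ ωe, V 0 ωe ∂μ)) :
    ∀ h : Fin d → ℝ,
      (dualNorm (α 0) h ≤ 1 → freeEnergySup α h = 0) ∧
      (1 < dualNorm (α 0) h →
        ∃ lamq : ℝ, 0 < lamq ∧ dualNorm (α lamq) h = 1 ∧
          (∀ lam' : ℝ, 0 < lam' → dualNorm (α lam') h = 1 → lam' = lamq) ∧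
          freeEnergySup α h = (lamq : EReal)) := by
  set c := -Real.log (∫ ωe, Real.exp (-V 0 ωe) ∂μ)
  have hc : 0 < c := neg_pos.2 <|
    log_integral_exp_neg_lt_zero (hV.1 0) (hV.2.1 0) fun h₀ => hV.2.2.2.2.1 ⟨0, h₀⟩
  have hlow : ∀ lam, 0 ≤ lam → ∀ x, norm1R x * (lam + c) ≤ α lam x := fun lam hlam x => by
    simpa [c, ← sub_eq_add_neg] using (hαbounds lam hlam x).1
  have hup : ∀ lam, 0 ≤ lam → ∀ x,
      α lam x ≤ norm1R x * (lam + (Real.log (2 * d) + ∫ ωe, V 0 ωe ∂μ)) := fun lam hlam x => by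
    simpa [add_assoc] using (hαbounds lam hlam x).2
  have hcont : ∀ x, ContinuousOn (fun lam => α lam x) (Ici 0) := fun x =>
    hαcont.comp (Continuous.prodMk_left x).continuousOn fun lam hlam => ⟨hlam, mem_univ x⟩
  intro h
  have hdual₀ : dualNorm (α 0) h ≤ 1 ↔ 0 ∈ dominationSet α h := by
    simp [dominationSet, dualNorm_le_iff (hαnorm 0 le_rfl) (by simpa) (hlow 0 le_rfl) h zero_le_one]
  obtain ⟨lamq, hleast⟩ := exists_isLeast_dominationSet hcont hlow hc.le h
  refine ⟨fun h₀ => ?_, fun h₀ => ?_⟩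
  · simpa using freeEnergySup_eq_of_isLeast hαnorm hαconc hlow
      ⟨hdual₀.1 h₀, fun _ hlam => hlam.1⟩
  have hpos : 0 < lamq := hleast.1.1.lt_of_ne fun hq => h₀.not_ge (hdual₀.2 (hq ▸ hleast.1))
  have hone : ∀ {lam}, 0 < lam → (dualNorm (α lam) h = 1 ↔ IsLeast (dominationSet α h) lam) :=
    dualNorm_eq_one_iff_isLeast hαnorm hαconc hlow hup hc
  exact ⟨lamq, hpos, (hone hpos).2 hleast, fun lam' hlam' h₁ => ((hone hlam').1 h₁).unique hleast,
    freeEnergySup_eq_of_isLeast hαnorm hαconc hlow hleast⟩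

/-- **Identification of the quenched free energy** (Flury, (31)). For every `h`,
`sup_x (h·x − I(x)) = 0` when `α*₀(h) ≤ 1`, and `= λ^{qu}_h` when `α*₀(h) > 1`, where
`λ^{qu}_h` is the unique `λ > 0` with `α*_λ(h) = 1`. -/
theorem quenched_free_energy_identification
    {d : ℕ} (hd : 0 < d)
    {Ωe : Type*} [MeasurableSpace Ωe] (μ : Measure Ωe) [IsProbabilityMeasure μ]
    (V : (Fin d → ℤ) → Ωe → ℝ) (hV : IsIIDPotential μ V)
    (α : ℝ → (Fin d → ℝ) → ℝ)
    (hαnorm : ∀ lam : ℝ, 0 ≤ lam → IsNorm (α lam))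
    (hαcont : ContinuousOn (fun p : ℝ × (Fin d → ℝ) => α p.1 p.2) (Ici 0 ×ˢ univ))
    (hαconc : ∀ x : Fin d → ℝ, ConcaveOn ℝ (Ici 0) (fun lam => α lam x))
    (hαsmono : ∀ x : Fin d → ℝ, x ≠ 0 → StrictMonoOn (fun lam => α lam x) (Ici 0))
    (hαbounds : ∀ lam : ℝ, 0 ≤ lam → ∀ x : Fin d → ℝ,
      norm1R x * (lam - Real.log (∫ ωe, Real.exp (-V 0 ωe) ∂μ)) ≤ α lam x ∧
        α lam x ≤ norm1R x * (lam + Real.log (2 * (d : ℝ)) + ∫ ωe, V 0 ωe ∂μ)) :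
    ∀ h : Fin d → ℝ,
      (dualNorm (α 0) h ≤ 1 → freeEnergySup α h = 0) ∧
      (1 < dualNorm (α 0) h →
        ∃ lamq : ℝ, 0 < lamq ∧ dualNorm (α lamq) h = 1 ∧
          (∀ lam' : ℝ, 0 < lam' → dualNorm (α lam') h = 1 → lam' = lamq) ∧
          freeEnergySup α h = (lamq : EReal)) :=
  quenched_free_energy_identification_general μ V hV α hαnorm hαcont hαconc hαbounds

end RWRP
end
end
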